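/- Let X = (X^{(1)},…,X^{(p)}) be a random vector and Y a square-integrable real random variable with Var[Y] > 0. If, for some j ∈ {1,…,p}, the coordinate X^{(j)} is independent of the pair (X^{(−j)}, Y), where X^{(−j)} = (X^{(k)})_{k≠j}, then its Shapley effect is null: Sh*(X^{(j)}) = 0. -/

import Mathlib

/-!
Adjoining an independent coordinate does not change a conditional expectation: if
`σ(X^{(j)})` is independent of `σ(X^{(U)}) ⊔ σ(Y)`, then
`E[Y | X^{(U∪{j})}] = E[Y | X^{(U)}]` a.s., since both have the same integral over every set
`A ∩ B` with `A ∈ σ(X^{(U)})`, `B ∈ σ(X^{(j)})` (each factorises as `P(B) · ∫_A Y`), and these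
sets form a π-system generating `σ(X^{(U∪{j})})`. So every marginal contribution in the
Shapley sum of `X^{(j)}` vanishes.
-/

open MeasureTheory ProbabilityTheory

/-- The σ-algebra generated by the subvector `X^{(U)} = (X^{(j)})_{j∈U}` of `X`. -/
def subSigma {Ω : Type*} [MeasurableSpace Ω] {p : ℕ} (X : Ω → Fin p → ℝ)
    (U : Finset (Fin p)) : MeasurableSpace Ω :=
  MeasurableSpace.comap (fun ω => fun j : U => X ω j) inferInstance

/-- The Shapley effect of the `j`-th input variable:
`Sh*(X^{(j)}) = Σ_{U ⊆ {1,…,p}\{j}} (1/p) · C(p−1,|U|)⁻¹ ·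
  (Var[E[Y | X^{(U∪{j})}]] − Var[E[Y | X^{(U)}]]) / Var[Y]`. -/
noncomputable def shapleyEffect {Ω : Type*} [MeasurableSpace Ω] (μ : Measure Ω)
    {p : ℕ} (X : Ω → Fin p → ℝ) (Y : Ω → ℝ) (j : Fin p) : ℝ :=
  ∑ U ∈ (Finset.univ.erase j).powerset,
    (1 / p : ℝ) * ((p - 1).choose U.card : ℝ)⁻¹ *
      ((variance (μ[Y | subSigma X (insert j U)]) μ
        - variance (μ[Y | subSigma X U]) μ) / variance Y μ)

open Set in
theorem isPiSystem_image2_inter {α : Type*} {C D : Set (Set α)} (hC : IsPiSystem C)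
    (hD : IsPiSystem D) : IsPiSystem (image2 (· ∩ ·) C D) := by
  rintro _ ⟨s₁, hs₁, s₂, hs₂, rfl⟩ _ ⟨t₁, ht₁, t₂, ht₂, rfl⟩ hst
  rw [inter_inter_inter_comm] at hst ⊢
  exact mem_image2_of_mem (hC _ hs₁ _ ht₁ hst.left) (hD _ hs₂ _ ht₂ hst.right)

open Set in
theorem MeasurableSpace.sup_eq_generateFrom_image2_inter {α : Type*}
    (m₁ m₂ : MeasurableSpace α) :
    m₁ ⊔ m₂ = generateFrom
      (image2 (· ∩ ·) {s | MeasurableSet[m₁] s} {t | MeasurableSet[m₂] t}) := by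
  refine le_antisymm (sup_le ?_ ?_) (generateFrom_le ?_)
  · exact fun s hs => measurableSet_generateFrom ⟨s, hs, univ, .univ, inter_univ s⟩
  · exact fun t ht => measurableSet_generateFrom ⟨univ, .univ, t, ht, univ_inter t⟩
  · rintro _ ⟨s, hs, t, ht, rfl⟩
    exact (le_sup_left (a := m₁) _ hs).inter (le_sup_right (a := m₁) _ ht)

section Independence

variable {Ω : Type*} {m₁ m₂ mf m0 : MeasurableSpace Ω} {μ : Measure Ω}

theorem setIntegral_inter_eq_measureReal_mul_of_indep (hm₂ : m₂ ≤ m0)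
    (hind : Indep m₂ mf μ) {f : Ω → ℝ} (hfm : Measurable[mf] f) (hf : Integrable f μ)
    {t₁ t₂ : Set Ω} (ht₁f : MeasurableSet[mf] t₁) (ht₁ : MeasurableSet[m0] t₁)
    (ht₂ : MeasurableSet[m₂] t₂) :
    ∫ x in t₁ ∩ t₂, f x ∂μ = μ.real t₂ * ∫ x in t₁, f x ∂μ := by
  have h₂ : Measurable[m₂] (t₂.indicator (1 : Ω → ℝ)) := measurable_const.indicator ht₂
  have h₁ : Measurable[mf] (t₁.indicator f) := hfm.indicator ht₁f
  have hindep : IndepFun (t₂.indicator 1) (t₁.indicator f) μ :=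
    (IndepFun_iff_Indep _ _ μ).2 <| indep_of_indep_of_le hind h₂.comap_le h₁.comap_le
  calc ∫ x in t₁ ∩ t₂, f x ∂μ
      = ∫ x, (t₂.indicator (1 : Ω → ℝ) * t₁.indicator f) x ∂μ := by
        rw [Set.inter_comm, ← integral_indicator ((hm₂ _ ht₂).inter ht₁)]
        congr with x
        simpa using Set.inter_indicator_mul (s := t₂) (t := t₁) 1 f x
    _ = μ.real t₂ * ∫ x in t₁, f x ∂μ := by
        rw [hindep.integral_mul_eq_mul_integral
          (aestronglyMeasurable_const.indicator (hm₂ _ ht₂))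
          (hf.indicator ht₁).aestronglyMeasurable, integral_indicator_one (hm₂ _ ht₂),
          integral_indicator ht₁]

theorem condExp_sup_ae_eq_of_indep [IsFiniteMeasure μ] (hm₁ : m₁ ≤ m0) (hm₂ : m₂ ≤ m0)
    {Y : Ω → ℝ}
    (hind : Indep m₂ (m₁ ⊔ MeasurableSpace.comap Y inferInstance) μ) :
    μ[Y | m₁ ⊔ m₂] =ᵐ[μ] μ[Y | m₁] := by
  by_cases hY : Integrable Y μ
  swap
  · simp [condExp_of_not_integrable hY]
  have hm : m₁ ⊔ m₂ ≤ m0 := sup_le hm₁ hm₂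
  have hg : StronglyMeasurable[m₁ ⊔ m₂] (μ[Y | m₁]) :=
    stronglyMeasurable_condExp.mono le_sup_left
  suffices h : ∀ s, MeasurableSet[m₁ ⊔ m₂] s →
      ∫ x in s, μ[Y | m₁] x ∂μ = ∫ x in s, Y x ∂μ from
    (ae_eq_condExp_of_forall_setIntegral_eq hm hY (fun _ _ _ => integrable_condExp.integrableOn)
      (fun s hs _ => h s hs) hg.aestronglyMeasurable).symm
  intro s hs
  induction s, hs using MeasurableSpace.induction_on_inter
    (MeasurableSpace.sup_eq_generateFrom_image2_inter m₁ m₂)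
    (isPiSystem_image2_inter (@MeasurableSpace.isPiSystem_measurableSet _ m₁)
      (@MeasurableSpace.isPiSystem_measurableSet _ m₂)) with
  | empty => simp
  | basic _ ht =>
    obtain ⟨t₁, ht₁, t₂, ht₂, rfl⟩ := ht
    rw [setIntegral_inter_eq_measureReal_mul_of_indep hm₂
        (indep_of_indep_of_le_right hind le_sup_left) stronglyMeasurable_condExp.measurable
        integrable_condExp ht₁ (hm₁ _ ht₁) ht₂,
      setIntegral_inter_eq_measureReal_mul_of_indep hm₂ hind
        ((comap_measurable Y).mono le_sup_right le_rfl) hY (le_sup_left (a := m₁) _ ht₁)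
        (hm₁ _ ht₁) ht₂,
      setIntegral_condExp hm₁ hY ht₁]
  | compl t ht iht =>
    have h₁ := integral_add_compl (hm _ ht) (integrable_condExp (m := m₁) (f := Y) (μ := μ))
    have h₂ := integral_add_compl (hm _ ht) hY
    rw [integral_condExp hm₁] at h₁
    linarith
  | iUnion f hdisj hf ihf =>
    rw [integral_iUnion (fun i => hm _ (hf i)) hdisj integrable_condExp.integrableOn,
      integral_iUnion (fun i => hm _ (hf i)) hdisj hY.integrableOn]
    exact tsum_congr ihf

end Independence

theorem Measurable.comap_comp_le {α β γ : Type*} [MeasurableSpace β] [MeasurableSpace γ]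
    {g : β → γ} (hg : Measurable g) (f : α → β) :
    MeasurableSpace.comap (g ∘ f) inferInstance ≤ MeasurableSpace.comap f inferInstance := by
  rw [← MeasurableSpace.comap_comp]
  exact MeasurableSpace.comap_mono hg.comap_le

section Shapley

variable {Ω : Type*} [MeasurableSpace Ω] {p : ℕ} (X : Ω → Fin p → ℝ)

theorem subSigma_eq_iSup (U : Finset (Fin p)) :
    subSigma X U = ⨆ k ∈ U, MeasurableSpace.comap (X · k) inferInstance := by
  rw [subSigma, MeasurableSpace.pi, MeasurableSpace.comap_iSup, iSup_subtype']
  simp_rw [MeasurableSpace.comap_comp, Function.comp_def]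

theorem subSigma_insert (U : Finset (Fin p)) (j : Fin p) :
    subSigma X (insert j U) = subSigma X U ⊔ MeasurableSpace.comap (X · j) inferInstance := by
  rw [subSigma_eq_iSup, subSigma_eq_iSup, Finset.iSup_insert, sup_comm]

variable {X}

theorem subSigma_le (hX : Measurable X) (U : Finset (Fin p)) :
    subSigma X U ≤ ‹MeasurableSpace Ω› :=
  Measurable.comap_le (measurable_pi_lambda _ fun k => (measurable_pi_apply k.1).comp hX)

theorem indep_comap_apply_subSigma_sup_of_indepFun {μ : Measure Ω} {Y : Ω → ℝ} {j : Fin p}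
    (hindep : IndepFun (fun ω => X ω j)
      (fun ω => ((fun k : {k : Fin p // k ≠ j} => X ω k), Y ω)) μ)
    {U : Finset (Fin p)} (hjU : j ∉ U) :
    Indep (MeasurableSpace.comap (X · j) inferInstance)
      (subSigma X U ⊔ MeasurableSpace.comap Y inferInstance) μ := by
  set P := fun ω => ((fun k : {k : Fin p // k ≠ j} => X ω k), Y ω)
  refine indep_of_indep_of_le_right ((IndepFun_iff_Indep _ _ μ).1 hindep) (sup_le ?_ ?_)
  · have hrestrict : Measurable fun w : ({k : Fin p // k ≠ j} → ℝ) × ℝ => fun k : U =>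
        w.1 ⟨k, ne_of_mem_of_not_mem k.2 hjU⟩ :=
      measurable_pi_lambda _ fun k => (measurable_pi_apply _).comp measurable_fst
    exact hrestrict.comap_comp_le P
  · exact measurable_snd.comap_comp_le P

end Shapley

theorem shapleyEffect_null_general {Ω : Type*} [MeasurableSpace Ω]
    (μ : Measure Ω) [IsProbabilityMeasure μ] (p : ℕ)
    (X : Ω → Fin p → ℝ) (hX : Measurable X)
    (Y : Ω → ℝ)
    (j : Fin p)
    (hindep : IndepFun (fun ω => X ω j)
      (fun ω => ((fun k : {k : Fin p // k ≠ j} => X ω k), Y ω)) μ) :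
    shapleyEffect μ X Y j = 0 := by
  refine Finset.sum_eq_zero fun U hU => ?_
  have hjU : j ∉ U := fun hj => Finset.notMem_erase j _ (Finset.mem_powerset.1 hU hj)
  have hcondExp : μ[Y | subSigma X (insert j U)] =ᵐ[μ] μ[Y | subSigma X U] := by
    rw [subSigma_insert]
    exact condExp_sup_ae_eq_of_indep (subSigma_le hX U)
      (measurable_pi_apply j |>.comp hX).comap_le
      (indep_comap_apply_subSigma_sup_of_indepFun hindep hjU)
  rw [variance_congr hcondExp, sub_self, zero_div, mul_zero]

/-- Null player property of Shapley effects: if `X^{(j)}` is independent of the pair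
`(X^{(−j)}, Y)`, where `X^{(−j)} = (X^{(k)})_{k≠j}`, then `Sh*(X^{(j)}) = 0`. -/
theorem shapleyEffect_null {Ω : Type*} [MeasurableSpace Ω]
    (μ : Measure Ω) [IsProbabilityMeasure μ] (p : ℕ)
    (X : Ω → Fin p → ℝ) (hX : Measurable X)
    (Y : Ω → ℝ) (hY : MemLp Y 2 μ) (hVarY : 0 < variance Y μ)
    (j : Fin p)
    (hindep : IndepFun (fun ω => X ω j)
      (fun ω => ((fun k : {k : Fin p // k ≠ j} => X ω k), Y ω)) μ) :
    shapleyEffect μ X Y j = 0 :=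
  shapleyEffect_null_general μ p X hX Y j hindep
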